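/- arXiv:1701.08613 — 5 statements merged into one kernel-verified Lean document; each statement's English description precedes it below -/
import Mathlib

section
/- For a monic-or-general univariate polynomial f ∈ ℂ[x] of degree d ≥ 1 with roots α₁,…,α_d, and a point z ∈ ℂ with f(z) ≠ 0, for every k with 1 ≤ k ≤ d one has |f^{(k)}(z)/f(z)|^{1/k} ≤ d / sep(f,z), where sep(f,z) := min_i |z − α_i|. -/
/-!
Write `f = c ∏ᵢ (X - αᵢ)`. By the product rule, the derivative of `∏_{a ∈ M} (X - a)` is the sum,
over `a ∈ M`, of the product with the factor `X - a` removed, and removing a factor divides the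
value at `z` by `|z - a| ≥ sep(f, z)`. Induction on `k` therefore gives
`|f^{(k)}(z)| ≤ (d / sep(f, z))^k |f(z)|`, and the claim follows by taking `k`-th roots.
-/

open Polynomial Metric

section NormedField

variable {K : Type*} [NormedField K]

lemma norm_eval_prod_X_sub_C_erase_mul_le [DecidableEq K] {M : Multiset K} {a z : K} {ε : ℝ}
    (ha : a ∈ M) (hε : ε ≤ ‖z - a‖) :
    ‖((M.erase a).map (X - C ·)).prod.eval z‖ * ε ≤ ‖(M.map (X - C ·)).prod.eval z‖ := by
  conv_rhs => rw [← Multiset.cons_erase ha]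
  rw [Multiset.map_cons, Multiset.prod_cons, eval_mul, norm_mul, mul_comm]
  simp only [eval_sub, eval_X, eval_C]
  gcongr

lemma norm_eval_iterate_derivative_prod_X_sub_C_le {M : Multiset K} {z : K} {ε : ℝ} (hε : 0 < ε)
    (hM : ∀ a ∈ M, ε ≤ ‖z - a‖) (k : ℕ) :
    ‖(derivative^[k] (M.map (X - C ·)).prod).eval z‖
      ≤ (M.card / ε) ^ k * ‖(M.map (X - C ·)).prod.eval z‖ := by
  classical
  induction k generalizing M with
  | zero => simp
  | succ k ih =>
    have hderiv : derivative (M.map (X - C ·)).prod =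
        (M.map fun a ↦ ((M.erase a).map (X - C ·)).prod).sum := by
      simp [derivative_prod]
    have hterm : ∀ a ∈ M, ‖(derivative^[k] ((M.erase a).map (X - C ·)).prod).eval z‖
        ≤ (M.card / ε) ^ k / ε * ‖(M.map (X - C ·)).prod.eval z‖ := by
      intro a ha
      calc _ ≤ ((M.erase a).card / ε) ^ k * ‖((M.erase a).map (X - C ·)).prod.eval z‖ :=
            ih fun b hb ↦ hM b (Multiset.mem_of_mem_erase hb)
        _ ≤ (M.card / ε) ^ k * (‖(M.map (X - C ·)).prod.eval z‖ / ε) := by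
            gcongr
            · exact Multiset.erase_le a M
            · rw [le_div_iff₀ hε]
              exact norm_eval_prod_X_sub_C_erase_mul_le ha (hM a ha)
        _ = _ := by ring
    exact calc
      ‖(derivative^[k + 1] (M.map (X - C ·)).prod).eval z‖
        = ‖(M.map fun a ↦ (derivative^[k] ((M.erase a).map (X - C ·)).prod).eval z).sum‖ := by
          rw [Function.iterate_succ_apply, hderiv, ← Module.End.coe_pow, map_multiset_sum,
            ← coe_evalRingHom, map_multiset_sum, Multiset.map_map, Multiset.map_map]
          rfl
      _ ≤ (M.map fun a ↦ ‖(derivative^[k] ((M.erase a).map (X - C ·)).prod).eval z‖).sum :=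
          (norm_multiset_sum_le _).trans_eq (by rw [Multiset.map_map]; rfl)
      _ ≤ (M.map fun _ ↦ (M.card / ε) ^ k / ε * ‖(M.map (X - C ·)).prod.eval z‖).sum :=
          Multiset.sum_map_le_sum_map _ _ hterm
      _ = (M.card / ε) ^ (k + 1) * ‖(M.map (X - C ·)).prod.eval z‖ := by
          rw [Multiset.map_const', Multiset.sum_replicate, nsmul_eq_mul]
          ring

lemma Polynomial.Splits.norm_eval_iterate_derivative_le {f : K[X]} (hf : f.Splits) {z : K}
    {ε : ℝ} (hε : 0 < ε) (hroots : ∀ a ∈ f.roots, ε ≤ ‖z - a‖) (k : ℕ) :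
    ‖(derivative^[k] f).eval z‖ ≤ (f.natDegree / ε) ^ k * ‖f.eval z‖ := by
  have hprod := hf.eq_prod_roots
  rw [hf.natDegree_eq_card_roots]
  generalize f.leadingCoeff = c, f.roots = M at hprod hroots ⊢
  subst hprod
  rw [iterate_derivative_C_mul, eval_mul, eval_mul, eval_C, norm_mul, norm_mul,
    mul_left_comm]
  gcongr
  exact norm_eval_iterate_derivative_prod_X_sub_C_le hε hroots k

lemma infDist_rootSet_le_norm_sub {f : K[X]} {z a : K} (ha : a ∈ f.roots) :
    infDist z (f.rootSet K) ≤ ‖z - a‖ := by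
  rw [← dist_eq_norm]
  exact infDist_le_dist_of_mem
    (by simpa [mem_rootSet, ne_zero_of_mem_roots ha] using isRoot_of_mem_roots ha)

lemma infDist_rootSet_pos {f : K[X]} {z : K} (hz : f.eval z ≠ 0) (hne : (f.rootSet K).Nonempty) :
    0 < infDist z (f.rootSet K) := by
  rw [← (f.rootSet_finite K).isClosed.notMem_iff_infDist_pos hne]
  exact fun h ↦ hz (by simpa using (mem_rootSet.1 h).2)

end NormedField

theorem stmt0_general (f : Polynomial ℂ) (d : ℕ) (hd : f.natDegree = d) (hd1 : 1 ≤ d)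
    (z : ℂ) (hz : f.eval z ≠ 0) (k : ℕ) (hk1 : 1 ≤ k) :
    ‖(Polynomial.derivative^[k] f).eval z / f.eval z‖ ^ ((1 : ℝ) / k)
      ≤ d / infDist z (f.rootSet ℂ) := by
  have hf : f ≠ 0 := by rintro rfl; simp at hz
  have hne : (f.rootSet ℂ).Nonempty := by
    obtain ⟨a, ha⟩ := IsAlgClosed.exists_root f (by rw [degree_eq_natDegree hf]; norm_cast; omega)
    exact ⟨a, by simpa [mem_rootSet, hf] using ha⟩
  have hε := infDist_rootSet_pos hz hne
  have hbound := (IsAlgClosed.splits f).norm_eval_iterate_derivative_le hε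
    (fun _ ↦ infDist_rootSet_le_norm_sub) k
  rw [hd, ← div_le_iff₀ (norm_pos_iff.2 hz), ← norm_div] at hbound
  rw [one_div, Real.rpow_inv_le_iff_of_pos (norm_nonneg _) (by positivity) (by positivity),
    Real.rpow_natCast]
  exact hbound

theorem stmt0 (f : Polynomial ℂ) (d : ℕ) (hd : f.natDegree = d) (hd1 : 1 ≤ d)
    (z : ℂ) (hz : f.eval z ≠ 0) (k : ℕ) (hk1 : 1 ≤ k) (hkd : k ≤ d) :
    ‖(Polynomial.derivative^[k] f).eval z / f.eval z‖ ^ ((1 : ℝ) / k)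
      ≤ d / infDist z (f.rootSet ℂ) :=
  stmt0_general f d hd hd1 z hz k hk1
end

section
/- For a univariate polynomial f ∈ ℂ[x] of degree d ≥ 1 and a point z ∈ ℂ with f(z) ≠ 0, the distance from z to the nearest root of f satisfies sep(f,z) ≤ d · min_{1 ≤ k ≤ d} |f(z)/f^{(k)}(z)|^{1/k}, interpreting the term as +∞ when f^{(k)}(z) = 0. -/
/-!
Write `f = c ∏ᵢ (X - αᵢ)`. By Leibniz, `((X - a) g)^{(j+1)} = (X - a) g^{(j+1)} + (j + 1) g^{(j)}`,
so induction on the number of roots gives `|f^{(k)}(z)| rᵏ ≤ d (d - 1) ⋯ (d - k + 1) |f(z)|`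
whenever every root lies at distance at least `r` from `z`. Taking `r = sep(f, z)`, bounding the
falling factorial by `dᵏ` and extracting `k`-th roots gives the claim.
-/

open Polynomial Metric

theorem Nat.succ_descFactorial_succ_eq_add (m j : ℕ) :
    (m + 1).descFactorial (j + 1) = m.descFactorial (j + 1) + (j + 1) * m.descFactorial j := by
  simp only [Nat.descFactorial_eq_factorial_mul_choose, Nat.choose_succ_succ', Nat.factorial_succ]
  ring

namespace Polynomial

theorem iterate_derivative_X_sub_C_mul {R : Type*} [CommRing R] (a : R) (p : R[X]) (n : ℕ) :
    derivative^[n + 1] ((X - C a) * p) =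
      (X - C a) * derivative^[n + 1] p + (n + 1) • derivative^[n] p := by
  induction n with
  | zero => simp [derivative_mul, add_comm]
  | succ n ih =>
    rw [Function.iterate_succ_apply', ih, Function.iterate_succ_apply' _ (n + 1),
      Function.iterate_succ_apply' _ n]
    simp only [derivative_add, derivative_mul, derivative_sub, derivative_X, derivative_C,
      derivative_smul, sub_zero, one_mul]
    rw [succ_nsmul _ (n + 1)]
    abel

variable {𝕜 : Type*} [NormedField 𝕜] {z : 𝕜} {r : ℝ}

theorem norm_eval_iterate_derivative_multiset_prod_X_sub_C_mul_pow_le (hr : 0 ≤ r)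
    {s : Multiset 𝕜} (hs : ∀ a ∈ s, r ≤ ‖z - a‖) (k : ℕ) :
    ‖(derivative^[k] (s.map (X - C ·)).prod).eval z‖ * r ^ k ≤
      (Multiset.card s).descFactorial k * ‖((s.map (X - C ·)).prod).eval z‖ := by
  induction s using Multiset.induction generalizing k with
  | empty => cases k <;> simp
  | cons a s ih =>
    obtain ⟨ha, hs⟩ := Multiset.forall_mem_cons.mp hs
    cases k with
    | zero => simp
    | succ j =>
      set g := (s.map (X - C ·)).prod
      have hstep : ‖(derivative^[j + 1] ((X - C a) * g)).eval z‖ ≤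
          ‖z - a‖ * ‖(derivative^[j + 1] g).eval z‖ + (j + 1) * ‖(derivative^[j] g).eval z‖ := by
        rw [iterate_derivative_X_sub_C_mul, eval_add, eval_mul, eval_smul, eval_sub, eval_X,
          eval_C, ← norm_mul]
        have hsmul := norm_nsmul_le (n := j + 1) (a := (derivative^[j] g).eval z)
        push_cast at hsmul
        exact (norm_add_le _ _).trans (add_le_add_right hsmul _)
      rw [Multiset.map_cons, Multiset.prod_cons, Multiset.card_cons,
        Nat.succ_descFactorial_succ_eq_add, eval_mul, eval_sub, eval_X, eval_C, norm_mul]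
      push_cast
      calc ‖(derivative^[j + 1] ((X - C a) * g)).eval z‖ * r ^ (j + 1)
          ≤ (‖z - a‖ * ‖(derivative^[j + 1] g).eval z‖ + (j + 1) * ‖(derivative^[j] g).eval z‖)
            * r ^ (j + 1) := by gcongr
        _ = ‖z - a‖ * (‖(derivative^[j + 1] g).eval z‖ * r ^ (j + 1))
            + (j + 1) * (‖(derivative^[j] g).eval z‖ * r ^ j) * r := by ring
        _ ≤ ‖z - a‖ * ((Multiset.card s).descFactorial (j + 1) * ‖g.eval z‖)
            + (j + 1) * ((Multiset.card s).descFactorial j * ‖g.eval z‖) * ‖z - a‖ := by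
            gcongr _ * ?_ + _ * ?_ * ?_
            exacts [ih hs (j + 1), ih hs j]
        _ = _ := by ring

theorem norm_eval_iterate_derivative_mul_pow_le {p : 𝕜[X]} (hp : p.Splits) (hr : 0 ≤ r)
    (hroots : ∀ a ∈ p.roots, r ≤ ‖z - a‖) (k : ℕ) :
    ‖(derivative^[k] p).eval z‖ * r ^ k ≤ p.natDegree.descFactorial k * ‖p.eval z‖ := by
  have hcard := splits_iff_card_roots.mp hp
  set q := (p.roots.map (X - C ·)).prod
  have hfactor : C p.leadingCoeff * q = p := C_leadingCoeff_mul_prod_multiset_X_sub_C hcard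
  have hp_eval : ‖p.eval z‖ = ‖p.leadingCoeff‖ * ‖q.eval z‖ := by
    conv_lhs => rw [← hfactor]
    rw [eval_mul, eval_C, norm_mul]
  have hpk_eval : ‖(derivative^[k] p).eval z‖ =
      ‖p.leadingCoeff‖ * ‖(derivative^[k] q).eval z‖ := by
    conv_lhs => rw [← hfactor]
    rw [iterate_derivative_C_mul, eval_mul, eval_C, norm_mul]
  rw [hp_eval, hpk_eval, ← hcard, mul_assoc, mul_left_comm _ ‖p.leadingCoeff‖]
  exact mul_le_mul_of_nonneg_left
    (norm_eval_iterate_derivative_multiset_prod_X_sub_C_mul_pow_le hr hroots k) (norm_nonneg _)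

end Polynomial

theorem Real.le_mul_rpow_one_div_of_pow_le {r c A : ℝ} {k : ℕ} (hk : k ≠ 0) (hr : 0 ≤ r)
    (hc : 0 ≤ c) (hA : 0 ≤ A) (h : r ^ k ≤ c ^ k * A) : r ≤ c * A ^ ((1 : ℝ) / k) := by
  rw [← Real.pow_rpow_inv_natCast hc hk, one_div, ← Real.mul_rpow (by positivity) hA,
    Real.le_rpow_inv_iff_of_pos hr (by positivity) (by positivity), Real.rpow_natCast]
  exact h

theorem stmt1_general (f : Polynomial ℂ) (d : ℕ) (hd : f.natDegree = d)
    (z : ℂ) (k : ℕ) (hk1 : 1 ≤ k)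
    (hfk : (Polynomial.derivative^[k] f).eval z ≠ 0) :
    infDist z (f.rootSet ℂ)
      ≤ d * (‖f.eval z / (Polynomial.derivative^[k] f).eval z‖) ^ ((1 : ℝ) / k) := by
  subst hd
  have hroots : ∀ a ∈ f.roots, infDist z (f.rootSet ℂ) ≤ ‖z - a‖ := fun a ha =>
    (infDist_le_dist_of_mem (by simpa [mem_rootSet] using ha)).trans_eq (Complex.dist_eq z a)
  have hbound := norm_eval_iterate_derivative_mul_pow_le (IsAlgClosed.splits f) infDist_nonneg
    hroots k
  refine Real.le_mul_rpow_one_div_of_pow_le (by omega) infDist_nonneg (Nat.cast_nonneg _)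
    (norm_nonneg _) ?_
  rw [norm_div, mul_div_assoc', le_div_iff₀ (norm_pos_iff.mpr hfk), mul_comm]
  exact hbound.trans (by gcongr; exact_mod_cast Nat.descFactorial_le_pow _ _)

theorem stmt1 (f : Polynomial ℂ) (d : ℕ) (hd : f.natDegree = d) (hd1 : 1 ≤ d)
    (z : ℂ) (hz : f.eval z ≠ 0) (k : ℕ) (hk1 : 1 ≤ k) (hkd : k ≤ d)
    (hfk : (Polynomial.derivative^[k] f).eval z ≠ 0) :
    infDist z (f.rootSet ℂ)
      ≤ d * (‖f.eval z / (Polynomial.derivative^[k] f).eval z‖) ^ ((1 : ℝ) / k) :=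
  stmt1_general f d hd z k hk1 hfk
end

section
/- Let f ∈ ℂ[x] of degree d ≥ 1 with roots α₁,…,α_d, z ∈ ℂ with f(z) ≠ 0, and 1 ≤ k ≤ d. Then |f^{(k)}(z)/f(z)| ≤ k! · C(d,k) / sep(f,z)^k, where sep(f,z) := min_i |z − α_i| and C(d,k) is the binomial coefficient. -/
open Polynomial Metric

/-!
Writing `w_i = z - α_i`, Taylor expansion at `z` together with Vieta's formulas gives
`f⁽ᵏ⁾(z) = k! · c · e_{d-k}(w)` and `f(z) = c · ∏ w_i`, where `c` is the leading coefficient.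
Each of the `C(d, k)` monomials of `e_{d-k}(w)` omits exactly `k` of the factors `w_i`, all of
modulus at least `sep(f, z)`, so it is bounded by `|∏ w_i| / sep(f, z)^k`.
-/

namespace Multiset

variable {𝕜 : Type*} [NormedField 𝕜] {s t : Multiset 𝕜} {ε : ℝ}

theorem pow_card_le_norm_prod (hε : 0 ≤ ε) (hs : ∀ x ∈ s, ε ≤ ‖x‖) : ε ^ card s ≤ ‖s.prod‖ :=
  calc ε ^ card s = (s.map fun _ => ε).prod := by rw [map_const', prod_replicate]
    _ ≤ (s.map (‖·‖)).prod := prod_map_le_prod_map₀ _ _ (fun _ _ => hε) hs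
    _ = ‖s.prod‖ := (map_multiset_prod normHom s).symm

theorem norm_prod_mul_pow_le_of_le (hts : t ≤ s) (hε : 0 ≤ ε) (hs : ∀ x ∈ s, ε ≤ ‖x‖) :
    ‖t.prod‖ * ε ^ (card s - card t) ≤ ‖s.prod‖ := by
  obtain ⟨u, rfl⟩ := le_iff_exists_add.mp hts
  rw [prod_add, norm_mul, card_add, add_tsub_cancel_left]
  gcongr
  exact pow_card_le_norm_prod hε fun x hx => hs x (mem_add.mpr (Or.inr hx))

theorem norm_esymm_mul_pow_le {k : ℕ} (hk : k ≤ card s) (hε : 0 ≤ ε) (hs : ∀ x ∈ s, ε ≤ ‖x‖) :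
    ‖s.esymm (card s - k)‖ * ε ^ k ≤ (card s).choose k * ‖s.prod‖ := by
  have hterm : ∀ t ∈ powersetCard (card s - k) s, ‖t.prod‖ * ε ^ k ≤ ‖s.prod‖ := by
    intro t ht
    obtain ⟨hts, htcard⟩ := mem_powersetCard.mp ht
    simpa [htcard, Nat.sub_sub_self hk] using norm_prod_mul_pow_le_of_le hts hε hs
  calc ‖s.esymm (card s - k)‖ * ε ^ k
      ≤ ((powersetCard (card s - k) s).map fun t => ‖t.prod‖).sum * ε ^ k := by
        gcongr
        simpa [esymm, map_map] using norm_multiset_sum_le ((powersetCard (card s - k) s).map prod)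
    _ = ((powersetCard (card s - k) s).map fun t => ‖t.prod‖ * ε ^ k).sum := sum_map_mul_right.symm
    _ ≤ ((powersetCard (card s - k) s).map fun _ => ‖s.prod‖).sum := sum_map_le_sum_map _ _ hterm
    _ = (card s).choose k * ‖s.prod‖ := by
        rw [map_const', sum_replicate, card_powersetCard, Nat.choose_symm hk, nsmul_eq_mul]

end Multiset

namespace Polynomial

theorem Splits.eval_iterate_derivative {R : Type*} [CommRing R] [IsDomain R] {f : R[X]}
    (hf : f.Splits) (x : R) {k : ℕ} (hk : k ≤ f.natDegree) :
    (derivative^[k] f).eval x =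
      k.factorial * (f.leadingCoeff * (f.roots.map (x - ·)).esymm (f.natDegree - k)) := by
  have htaylor :
      Polynomial.taylor x f = C f.leadingCoeff * ((f.roots.map (x - ·)).map (X + C ·)).prod := by
    conv_lhs => rw [hf.eq_prod_roots]
    rw [← taylorAlgHom_apply, map_mul, map_multiset_prod]
    simp [Multiset.map_map, add_sub_assoc]
  rw [← factorial_smul_hasseDeriv, LinearMap.smul_apply, eval_smul, ← taylor_coeff,
    htaylor, coeff_C_mul, Multiset.prod_X_add_C_coeff _ (by simpa [← hf.natDegree_eq_card_roots]),
    Multiset.card_map, ← hf.natDegree_eq_card_roots, nsmul_eq_mul]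

variable {𝕜 : Type*} [NormedField 𝕜] {f : 𝕜[X]}

theorem infDist_rootSet_le_norm_sub (hf : f ≠ 0) {a : 𝕜} (ha : a ∈ f.roots) (z : 𝕜) :
    infDist z (f.rootSet 𝕜) ≤ ‖z - a‖ := by
  have ha' : a ∈ f.rootSet 𝕜 := mem_rootSet.mpr
    ⟨hf, by rw [aeval_def, Algebra.algebraMap_self, eval₂_id]; exact isRoot_of_mem_roots ha⟩
  exact (infDist_le_dist_of_mem ha').trans_eq (dist_eq_norm z a)

theorem infDist_rootSet_pos [IsAlgClosed 𝕜] (hf : 0 < f.natDegree) {z : 𝕜} (hz : f.eval z ≠ 0) :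
    0 < infDist z (f.rootSet 𝕜) := by
  have hf0 : f ≠ 0 := ne_zero_of_natDegree_gt hf
  obtain ⟨a, ha⟩ := IsAlgClosed.exists_root f (natDegree_pos_iff_degree_pos.mp hf).ne'
  refine ((f.rootSet_finite 𝕜).isClosed.notMem_iff_infDist_pos ⟨a, ?_⟩).mp ?_
  · exact mem_rootSet.mpr ⟨hf0, by simpa using ha⟩
  · simpa [mem_rootSet, hf0] using hz

end Polynomial

theorem stmt4_general (f : Polynomial ℂ) (d : ℕ) (hd : f.natDegree = d)
    (z : ℂ) (hz : f.eval z ≠ 0) (k : ℕ) (hkd : k ≤ d) :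
    ‖(Polynomial.derivative^[k] f).eval z / f.eval z‖
      ≤ (Nat.factorial k : ℝ) * (d.choose k) / infDist z (f.rootSet ℂ) ^ k := by
  subst hd
  set ε := infDist z (f.rootSet ℂ)
  have hf0 : f ≠ 0 := by rintro rfl; simp at hz
  have hf := IsAlgClosed.splits f
  set w := f.roots.map (z - ·)
  have hw : Multiset.card w = f.natDegree := by simp [w, ← hf.natDegree_eq_card_roots]
  have hεk : 0 < ε ^ k := by
    rcases k.eq_zero_or_pos with rfl | hk
    · simp
    · exact pow_pos (infDist_rootSet_pos (hk.trans_le hkd) hz) k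
  have hεw : ∀ x ∈ w, ε ≤ ‖x‖ := by
    simpa only [w, Multiset.forall_mem_map_iff] using
      fun a ha => infDist_rootSet_le_norm_sub hf0 ha z
  have hbound := w.norm_esymm_mul_pow_le (hw ▸ hkd) infDist_nonneg hεw
  rw [hw] at hbound
  have hlc : ‖f.leadingCoeff‖ ≠ 0 := by simpa using hf0
  have hP : 0 < ‖w.prod‖ :=
    norm_pos_iff.mpr (right_ne_zero_of_mul (hf.eval_eq_prod_roots z ▸ hz))
  rw [hf.eval_iterate_derivative z hkd, hf.eval_eq_prod_roots, le_div_iff₀ hεk, norm_div,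
    norm_mul, norm_mul, norm_mul, Complex.norm_natCast, mul_div_assoc, mul_div_mul_left _ _ hlc,
    mul_assoc]
  gcongr
  rwa [div_mul_eq_mul_div, div_le_iff₀ hP]

theorem stmt4 (f : Polynomial ℂ) (d : ℕ) (hd : f.natDegree = d) (hd1 : 1 ≤ d)
    (z : ℂ) (hz : f.eval z ≠ 0) (k : ℕ) (hk1 : 1 ≤ k) (hkd : k ≤ d) :
    ‖(Polynomial.derivative^[k] f).eval z / f.eval z‖
      ≤ (Nat.factorial k : ℝ) * (d.choose k) / infDist z (f.rootSet ℂ) ^ k :=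
  stmt4_general f d hd z hz k hkd
end

section
/- Let f ∈ ℂ[x,y] with f(0,0) = a_{0,0} ≠ 0 and total degree D ≥ 1. Define γ := max over 1 ≤ k ≤ D and 0 ≤ i ≤ k of ((k!/C(k,i)) · |a_{i,k−i}/a_{0,0}|)^{1/k}. Then every point x = (x,y) ∈ ℂ² with γ · (|x| + |y|) < ln 2 satisfies f(x,y) ≠ 0. -/
/-!
Write `f = a₀₀ + P₁ + ⋯ + P_D` with `P_k` homogeneous of degree `k`. By the definition of `γ`,
`|a_{i,k-i}| ≤ |a₀₀| γ^k C(k,i) / k!`, so the binomial theorem gives `|P_k(x,y)| ≤ |a₀₀| t^k / k!`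
with `t = γ (|x| + |y|)`. Summing, `|f(x,y) - a₀₀| ≤ |a₀₀| (eᵗ - 1) < |a₀₀|` because `eᵗ < 2`.
-/

open Finset Nat

lemma Real.sum_range_pow_succ_div_factorial_le_exp_sub_one {t : ℝ} (ht : 0 ≤ t) (n : ℕ) :
    ∑ k ∈ range n, t ^ (k + 1) / (k + 1)! ≤ Real.exp t - 1 := by
  have h := Real.sum_le_exp_of_nonneg ht (n + 1)
  rw [sum_range_succ'] at h
  simp only [pow_zero, factorial_zero, cast_one, div_one] at h
  linarith

lemma sum_range_succ_ne_zero_of_norm_le_mul_pow_div_factorial {E : Type*}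
    [NormedAddCommGroup E] (P : ℕ → E) (D : ℕ) (h0 : P 0 ≠ 0) {t : ℝ} (ht0 : 0 ≤ t)
    (ht : t < Real.log 2) (hP : ∀ k, 1 ≤ k → k ≤ D → ‖P k‖ ≤ ‖P 0‖ * (t ^ k / k !)) :
    ∑ k ∈ range (D + 1), P k ≠ 0 := by
  have hexp : Real.exp t < 2 := by
    simpa [Real.exp_log two_pos] using Real.exp_lt_exp.mpr ht
  have htail : ‖∑ k ∈ range D, P (k + 1)‖ < ‖P 0‖ :=
    calc ‖∑ k ∈ range D, P (k + 1)‖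
        ≤ ∑ k ∈ range D, ‖P 0‖ * (t ^ (k + 1) / (k + 1)!) := by
          refine (norm_sum_le _ _).trans (sum_le_sum fun k hk => ?_)
          exact_mod_cast hP (k + 1) le_add_self (mem_range.mp hk)
      _ = ‖P 0‖ * ∑ k ∈ range D, t ^ (k + 1) / (k + 1)! := (mul_sum _ _ _).symm
      _ ≤ ‖P 0‖ * (Real.exp t - 1) := by
          gcongr; exact Real.sum_range_pow_succ_div_factorial_le_exp_sub_one ht0 D
      _ < ‖P 0‖ * 1 := mul_lt_mul_of_pos_left (by linarith) (norm_pos_iff.mpr h0)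
      _ = ‖P 0‖ := mul_one _
  rw [sum_range_succ', add_comm]
  intro hsum
  rw [eq_neg_of_add_eq_zero_right hsum, norm_neg] at htail
  exact lt_irrefl _ htail

lemma norm_sum_mul_pow_mul_pow_le {R : Type*} [SeminormedRing R] [NormOneClass R] (k : ℕ)
    (c : ℕ → R) (M : ℝ) (hc : ∀ i ≤ k, ‖c i‖ ≤ M * k.choose i) (x y : R) :
    ‖∑ i ∈ range (k + 1), c i * x ^ i * y ^ (k - i)‖ ≤ M * (‖x‖ + ‖y‖) ^ k :=
  calc ‖∑ i ∈ range (k + 1), c i * x ^ i * y ^ (k - i)‖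
      ≤ ∑ i ∈ range (k + 1), M * k.choose i * (‖x‖ ^ i * ‖y‖ ^ (k - i)) := by
        refine (norm_sum_le _ _).trans (sum_le_sum fun i hi => ?_)
        have hci := hc i (Nat.lt_succ_iff.mp (mem_range.mp hi))
        have hM : 0 ≤ M * k.choose i := (norm_nonneg _).trans hci
        calc ‖c i * x ^ i * y ^ (k - i)‖ ≤ ‖c i‖ * ‖x ^ i‖ * ‖y ^ (k - i)‖ := norm_mul₃_le
          _ ≤ M * k.choose i * ‖x‖ ^ i * ‖y‖ ^ (k - i) :=
            mul_le_mul (mul_le_mul hci (norm_pow_le _ _) (norm_nonneg _) hM) (norm_pow_le _ _)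
              (norm_nonneg _) (by positivity)
          _ = M * k.choose i * (‖x‖ ^ i * ‖y‖ ^ (k - i)) := mul_assoc _ _ _
    _ = M * (‖x‖ + ‖y‖) ^ k := by
        rw [add_pow, mul_sum]
        exact sum_congr rfl fun i _ => by ring

lemma norm_le_of_rpow_one_div_le {𝕜 : Type*} [NormedDivisionRing 𝕜] {k i : ℕ} (hk : k ≠ 0)
    (hi : i ≤ k) {u c : 𝕜} (hc : c ≠ 0) {γ : ℝ} (hγ : 0 ≤ γ)
    (h : ((k ! : ℝ) / k.choose i * ‖u / c‖) ^ ((1 : ℝ) / k) ≤ γ) :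
    ‖u‖ ≤ ‖c‖ * γ ^ k / k ! * k.choose i := by
  have hC : (0 : ℝ) < k.choose i := by exact_mod_cast choose_pos hi
  have hF : (0 : ℝ) < k ! := by exact_mod_cast factorial_pos k
  have hc' : 0 < ‖c‖ := norm_pos_iff.mpr hc
  rw [one_div, Real.rpow_inv_le_iff_of_pos (by positivity) hγ (by positivity),
    Real.rpow_natCast, norm_div] at h
  rw [div_mul_eq_mul_div, le_div_iff₀ hF]
  calc ‖u‖ * k ! = k ! / k.choose i * (‖u‖ / ‖c‖) * (‖c‖ * k.choose i) := by
        field_simp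
    _ ≤ γ ^ k * (‖c‖ * k.choose i) := by gcongr
    _ = ‖c‖ * γ ^ k * k.choose i := by ring

theorem stmt12_general (D : ℕ) (a : ℕ → ℕ → ℂ) (ha : a 0 0 ≠ 0)
    (γ : ℝ)
    (hγ : γ = sSup {r : ℝ | ∃ k, 1 ≤ k ∧ k ≤ D ∧ ∃ i ≤ k,
      r = ((Nat.factorial k : ℝ) / (k.choose i) * ‖a i (k - i) / a 0 0‖)
            ^ ((1 : ℝ) / k)})
    (x y : ℂ) (hxy : γ * (‖x‖ + ‖y‖) < Real.log 2) :
    (∑ k ∈ Finset.range (D + 1), ∑ i ∈ Finset.range (k + 1),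
      a i (k - i) * x ^ i * y ^ (k - i)) ≠ 0 := by
  set S := {r : ℝ | ∃ k, 1 ≤ k ∧ k ≤ D ∧ ∃ i ≤ k,
    r = ((k ! : ℝ) / k.choose i * ‖a i (k - i) / a 0 0‖) ^ ((1 : ℝ) / k)}
  have hS : BddAbove S := by
    refine (((Set.finite_Iic D).prod (Set.finite_Iic D)).image fun p : ℕ × ℕ =>
      ((p.1 ! : ℝ) / p.1.choose p.2 * ‖a p.2 (p.1 - p.2) / a 0 0‖) ^ ((1 : ℝ) / p.1)
      ).subset ?_ |>.bddAbove
    rintro r ⟨k, -, hkD, i, hik, rfl⟩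
    exact ⟨(k, i), ⟨hkD, hik.trans hkD⟩, rfl⟩
  have hγ0 : 0 ≤ γ := hγ ▸ Real.sSup_nonneg fun r ⟨k, _, _, i, _, hr⟩ => hr ▸ by positivity
  have hP0 : ∑ i ∈ range (0 + 1), a i (0 - i) * x ^ i * y ^ (0 - i) = a 0 0 := by simp
  refine sum_range_succ_ne_zero_of_norm_le_mul_pow_div_factorial _ D (hP0 ▸ ha)
    (by positivity) hxy fun k hk hkD => ?_
  have hcoeff (i : ℕ) (hi : i ≤ k) : ‖a i (k - i)‖ ≤ ‖a 0 0‖ * γ ^ k / k ! * k.choose i :=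
    norm_le_of_rpow_one_div_le (by omega) hi ha hγ0 (hγ ▸ le_csSup hS ⟨k, hk, hkD, i, hi, rfl⟩)
  calc _ ≤ ‖a 0 0‖ * γ ^ k / k ! * (‖x‖ + ‖y‖) ^ k := norm_sum_mul_pow_mul_pow_le k _ _ hcoeff x y
    _ = _ := by rw [hP0, mul_pow]; ring

theorem stmt12 (D : ℕ) (hD : 1 ≤ D) (a : ℕ → ℕ → ℂ) (ha : a 0 0 ≠ 0)
    (γ : ℝ)
    (hγ : γ = sSup {r : ℝ | ∃ k, 1 ≤ k ∧ k ≤ D ∧ ∃ i ≤ k,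
      r = ((Nat.factorial k : ℝ) / (k.choose i) * ‖a i (k - i) / a 0 0‖)
            ^ ((1 : ℝ) / k)})
    (x y : ℂ) (hxy : γ * (‖x‖ + ‖y‖) < Real.log 2) :
    (∑ k ∈ Finset.range (D + 1), ∑ i ∈ Finset.range (k + 1),
      a i (k - i) * x ^ i * y ^ (k - i)) ≠ 0 :=
  stmt12_general D a ha γ hγ x y hxy
end

section
/- Let f ∈ ℂ[x,y] of total degree D ≥ 1 and p ∈ ℂ² with f(p) ≠ 0. Define γ_f(p) := max over 1 ≤ k ≤ D and 0 ≤ i ≤ k of |f_{i,k−i}(p)/f(p)|^{1/k}, where f_{i,j} are mixed partial derivatives. Then sep(p, V(f)) ≥ (ln 2)/(√2 · γ_f(p)) ≥ 1/(3 γ_f(p)), assuming γ_f(p) > 0. -/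
open MvPolynomial Metric Nat

/-!
Restrict `f` to the complex line through `p` and a zero `z`: `g(t) = f(p + t (z - p))`. Its
`k`-th coefficient is the degree-`k` part of the Taylor expansion of `f` at `p`, so by the
definition of `γ` and the binomial theorem `|g_k| ≤ |f(p)| (γ s)^k / k!` with
`s = |z₀ - p₀| + |z₁ - p₁|`. Since `g(1) = f(z) = 0`, the constant term `f(p)` is cancelled by
the others, whence `|f(p)| ≤ |f(p)| (e^{γ s} - 1)`, i.e. `γ s ≥ log 2`; finally `s ≤ √2 |z - p|`.
The weak Nullstellensatz guarantees that the zero set is nonempty, so that `infDist` to it is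
not the junk value `0`.
-/

theorem Polynomial.coeff_C_add_C_mul_X_pow {R : Type*} [CommSemiring R] (u v : R) (a i : ℕ) :
    ((C u + C v * X) ^ a).coeff i = a.choose i * u ^ (a - i) * v ^ i := by
  rw [add_comm, add_pow, finsetSum_coeff]
  simp_rw [mul_pow, ← C_pow, mul_assoc, mul_comm (X ^ _), ← mul_assoc, ← C_mul, ← Nat.cast_comm,
    ← C_eq_natCast, ← C_mul, coeff_C_mul_X_pow]
  rw [Finset.sum_ite_eq]
  split_ifs with h
  · ring
  · rw [Nat.choose_eq_zero_of_lt (by simpa [Nat.lt_succ_iff] using h)]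
    simp

theorem Polynomial.log_two_le_of_eval_one_eq_zero {R : Type*} [NormedRing R] {g : Polynomial R}
    (hg : g.eval 1 = 0) (h0 : g.coeff 0 ≠ 0) {x : ℝ} (hx : 0 ≤ x)
    (hcoeff : ∀ k, 1 ≤ k → ‖g.coeff k‖ ≤ ‖g.coeff 0‖ * x ^ k / k !) : Real.log 2 ≤ x := by
  set N := g.natDegree
  have hcoeff_zero : g.coeff 0 = -∑ k ∈ Finset.range N, g.coeff (k + 1) := by
    have h := g.eval_eq_sum_range (1 : R)
    rw [hg, Finset.sum_range_succ'] at h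
    simp only [one_pow, mul_one] at h
    exact eq_neg_of_add_eq_zero_right h.symm
  have hexp : ∑ k ∈ Finset.range N, x ^ (k + 1) / (k + 1)! ≤ Real.exp x - 1 := by
    have h := Real.sum_le_exp_of_nonneg hx (N + 1)
    rw [Finset.sum_range_succ'] at h
    simp only [pow_zero, factorial_zero, cast_one, div_one] at h
    linarith
  have hpos : 0 < ‖g.coeff 0‖ := norm_pos_iff.2 h0
  have : ‖g.coeff 0‖ ≤ ‖g.coeff 0‖ * (Real.exp x - 1) :=
    calc ‖g.coeff 0‖ ≤ ∑ k ∈ Finset.range N, ‖g.coeff (k + 1)‖ := by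
          rw [hcoeff_zero, norm_neg]
          exact norm_sum_le _ _
      _ ≤ ∑ k ∈ Finset.range N, ‖g.coeff 0‖ * (x ^ (k + 1) / (k + 1)!) :=
          Finset.sum_le_sum fun k _ => (hcoeff (k + 1) k.succ_pos).trans_eq (mul_div_assoc ..)
      _ ≤ ‖g.coeff 0‖ * (Real.exp x - 1) := by
          rw [← Finset.mul_sum]
          exact mul_le_mul_of_nonneg_left hexp hpos.le
  rw [Real.log_le_iff_le_exp two_pos]
  nlinarith

theorem add_pow_div_factorial {K : Type*} [Field K] [CharZero K] (a b : K) (k : ℕ) :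
    (a + b) ^ k / k ! = ∑ i ∈ Finset.range (k + 1), a ^ i * b ^ (k - i) / (i ! * (k - i)!) := by
  rw [add_pow, Finset.sum_div]
  refine Finset.sum_congr rfl fun i hi => ?_
  have hik : i ≤ k := Nat.lt_succ_iff.mp (Finset.mem_range.mp hi)
  rw [← Nat.choose_mul_factorial_mul_factorial hik]
  have : (i ! : K) ≠ 0 := Nat.cast_ne_zero.2 i.factorial_ne_zero
  have : ((k - i)! : K) ≠ 0 := Nat.cast_ne_zero.2 (k - i).factorial_ne_zero
  have : (k.choose i : K) ≠ 0 := Nat.cast_ne_zero.2 (Nat.choose_pos hik).ne'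
  push_cast
  field_simp

theorem EuclideanSpace.norm_sub_add_norm_sub_le {𝕜 : Type*} [RCLike 𝕜]
    (x y : EuclideanSpace 𝕜 (Fin 2)) : ‖y 0 - x 0‖ + ‖y 1 - x 1‖ ≤ √2 * dist x y := by
  rw [EuclideanSpace.dist_eq, Fin.sum_univ_two, dist_eq_norm, dist_eq_norm, norm_sub_rev (x 0),
    norm_sub_rev (x 1), ← Real.sqrt_mul zero_le_two]
  exact Real.le_sqrt_of_sq_le add_sq_le

namespace MvPolynomial

theorem exists_eval_eq_zero_of_totalDegree_ne_zero {σ K : Type*} [Finite σ] [Field K]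
    [IsAlgClosed K] {f : MvPolynomial σ K} (hf : f.totalDegree ≠ 0) : ∃ x, eval x f = 0 := by
  have hunit : ¬IsUnit f := fun h => hf (isUnit_iff_totalDegree_of_isReduced.1 h).2
  obtain ⟨M, hM, hfM⟩ := Ideal.exists_le_maximal _ (Ideal.span_singleton_eq_top.not.2 hunit)
  obtain ⟨x, rfl⟩ := eq_vanishingIdeal_singleton_of_isMaximal K hM
  exact ⟨x, (mem_vanishingIdeal_singleton_iff x f).1 (hfM (Ideal.mem_span_singleton_self f))⟩

section CommSemiring

variable {R σ : Type*} [CommSemiring R]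

theorem pderiv_iterate_eq_pow (i : σ) (n : ℕ) :
    (pderiv i : MvPolynomial σ R → MvPolynomial σ R)^[n] = ⇑((pderiv i).toLinearMap ^ n) :=
  (Module.End.coe_pow _ n).symm

theorem pderiv_iterate_monomial (i : σ) (n : ℕ) (m : σ →₀ ℕ) (c : R) :
    (pderiv i)^[n] (monomial m c) =
      monomial (m - Finsupp.single i n) (c * (m i).descFactorial n) := by
  induction n with
  | zero => simp
  | succ n ih =>
    rw [Function.iterate_succ_apply', ih, pderiv_monomial, tsub_tsub, ← Finsupp.single_add,
      Finsupp.tsub_apply, Finsupp.single_eq_same, Nat.descFactorial_succ]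
    push_cast
    ring_nf

theorem pderiv_iterate_pderiv_iterate_monomial (i j : ℕ) (m : Fin 2 →₀ ℕ) (c : R) :
    (pderiv 0)^[i] ((pderiv 1)^[j] (monomial m c)) =
      monomial (m - Finsupp.single 1 j - Finsupp.single 0 i)
        (c * (m 1).descFactorial j * (m 0).descFactorial i) := by
  rw [pderiv_iterate_monomial, pderiv_iterate_monomial]
  simp

theorem eval_pderiv_iterate_pderiv_iterate_monomial (p : Fin 2 → R) (i j : ℕ)
    (m : Fin 2 →₀ ℕ) (c : R) :
    eval p ((pderiv 0)^[i] ((pderiv 1)^[j] (monomial m c))) =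
      c * (m 1).descFactorial j * (m 0).descFactorial i * p 0 ^ (m 0 - i) * p 1 ^ (m 1 - j) := by
  rw [pderiv_iterate_pderiv_iterate_monomial, eval_monomial,
    Finsupp.prod_fintype _ _ fun _ => pow_zero _, Fin.prod_univ_two]
  simp [mul_assoc]

theorem pderiv_iterate_pderiv_iterate_eq_zero {f : MvPolynomial (Fin 2) R} {i j : ℕ}
    (h : f.totalDegree < i + j) : (pderiv 0)^[i] ((pderiv 1)^[j] f) = 0 := by
  rw [f.as_sum, pderiv_iterate_eq_pow, pderiv_iterate_eq_pow, map_sum, map_sum]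
  refine Finset.sum_eq_zero fun m hm => ?_
  have hm : m 0 + m 1 < i + j := by
    have := le_totalDegree hm
    rw [Finsupp.sum_fintype _ _ fun _ => rfl, Fin.sum_univ_two] at this
    omega
  rw [← pderiv_iterate_eq_pow, ← pderiv_iterate_eq_pow, pderiv_iterate_pderiv_iterate_monomial]
  rcases lt_or_ge (m 1) j with h1 | h1
  · simp [Nat.descFactorial_eq_zero_iff_lt.2 h1]
  · simp [Nat.descFactorial_eq_zero_iff_lt.2 (by omega : m 0 < i)]

noncomputable def restrictLine (f : MvPolynomial (Fin 2) R) (p h : Fin 2 → R) :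
    Polynomial R :=
  aeval (fun j => Polynomial.C (p j) + Polynomial.C (h j) * Polynomial.X) f

theorem eval_restrictLine (f : MvPolynomial (Fin 2) R) (p h : Fin 2 → R) (t : R) :
    (restrictLine f p h).eval t = eval (p + t • h) f := by
  rw [restrictLine, ← Polynomial.coe_aeval_eq_eval, ← AlgHom.comp_apply, comp_aeval]
  have hline : (fun j => Polynomial.aeval t
      (Polynomial.C (p j) + Polynomial.C (h j) * Polynomial.X)) = p + t • h := by
    ext j
    simp only [Polynomial.aeval_add, Polynomial.aeval_mul, Polynomial.aeval_C, Polynomial.aeval_X,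
      Algebra.algebraMap_self, RingHom.id_apply, Pi.add_apply, Pi.smul_apply, smul_eq_mul]
    ring
  exact congrArg (eval · f) hline

theorem coeff_zero_restrictLine (f : MvPolynomial (Fin 2) R) (p h : Fin 2 → R) :
    (restrictLine f p h).coeff 0 = eval p f := by
  rw [Polynomial.coeff_zero_eq_eval_zero, eval_restrictLine, zero_smul, add_zero]

end CommSemiring

section Line

variable {K : Type*} [Field K] [CharZero K]

theorem coeff_restrictLine (f : MvPolynomial (Fin 2) K) (p h : Fin 2 → K) (k : ℕ) :
    (restrictLine f p h).coeff k =
      ∑ i ∈ Finset.range (k + 1), eval p ((pderiv 0)^[i] ((pderiv 1)^[k - i] f)) *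
        h 0 ^ i * h 1 ^ (k - i) / (i ! * (k - i)!) := by
  induction f using MvPolynomial.induction_on' with
  | add q r hq hr =>
    rw [restrictLine, map_add, Polynomial.coeff_add, ← restrictLine, ← restrictLine, hq, hr,
      ← Finset.sum_add_distrib]
    refine Finset.sum_congr rfl fun i _ => ?_
    rw [pderiv_iterate_eq_pow, pderiv_iterate_eq_pow, map_add, map_add, map_add]
    ring
  | monomial m c =>
    rw [restrictLine, aeval_monomial, Finsupp.prod_fintype _ _ fun _ => pow_zero _,
      Fin.prod_univ_two, Polynomial.algebraMap_eq, Polynomial.coeff_C_mul, Polynomial.coeff_mul,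
      Finset.Nat.sum_antidiagonal_eq_sum_range_succ_mk, Finset.mul_sum]
    refine Finset.sum_congr rfl fun i _ => ?_
    rw [eval_pderiv_iterate_pderiv_iterate_monomial, Polynomial.coeff_C_add_C_mul_X_pow,
      Polynomial.coeff_C_add_C_mul_X_pow, Nat.descFactorial_eq_factorial_mul_choose,
      Nat.descFactorial_eq_factorial_mul_choose]
    have : (i ! : K) ≠ 0 := Nat.cast_ne_zero.2 i.factorial_ne_zero
    have : ((k - i)! : K) ≠ 0 := Nat.cast_ne_zero.2 (k - i).factorial_ne_zero
    push_cast
    field_simp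

end Line

section RCLike

variable {𝕜 : Type*} [RCLike 𝕜]

theorem norm_coeff_restrictLine_le {f : MvPolynomial (Fin 2) 𝕜} {p : Fin 2 → 𝕜} {c : ℝ}
    (hbound : ∀ k i, 1 ≤ k → i ≤ k →
      ‖eval p ((pderiv 0)^[i] ((pderiv 1)^[k - i] f))‖ ≤ ‖eval p f‖ * c ^ k)
    (h : Fin 2 → 𝕜) {k : ℕ} (hk : 1 ≤ k) :
    ‖(restrictLine f p h).coeff k‖ ≤ ‖eval p f‖ * (c * (‖h 0‖ + ‖h 1‖)) ^ k / k ! := by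
  rw [coeff_restrictLine]
  calc _ ≤ ∑ i ∈ Finset.range (k + 1), ‖eval p ((pderiv 0)^[i] ((pderiv 1)^[k - i] f))‖ *
          (‖h 0‖ ^ i * ‖h 1‖ ^ (k - i) / (i ! * (k - i)!)) := by
        refine (norm_sum_le _ _).trans_eq (Finset.sum_congr rfl fun i _ => ?_)
        simp only [norm_div, norm_mul, norm_pow, RCLike.norm_natCast]
        ring
    _ ≤ ∑ i ∈ Finset.range (k + 1), ‖eval p f‖ * c ^ k *
          (‖h 0‖ ^ i * ‖h 1‖ ^ (k - i) / (i ! * (k - i)!)) := by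
        refine Finset.sum_le_sum fun i hi => ?_
        gcongr
        exact hbound k i hk (Nat.lt_succ_iff.mp (Finset.mem_range.mp hi))
    _ = ‖eval p f‖ * (c * (‖h 0‖ + ‖h 1‖)) ^ k / k ! := by
        rw [← Finset.mul_sum, ← add_pow_div_factorial, mul_pow]
        ring

theorem log_two_le_mul_norm_sub_add_norm_sub {f : MvPolynomial (Fin 2) 𝕜} {p z : Fin 2 → 𝕜}
    (hp : eval p f ≠ 0) (hz : eval z f = 0) {c : ℝ} (hc : 0 ≤ c)
    (hbound : ∀ k i, 1 ≤ k → i ≤ k →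
      ‖eval p ((pderiv 0)^[i] ((pderiv 1)^[k - i] f))‖ ≤ ‖eval p f‖ * c ^ k) :
    Real.log 2 ≤ c * (‖z 0 - p 0‖ + ‖z 1 - p 1‖) := by
  refine Polynomial.log_two_le_of_eval_one_eq_zero (g := restrictLine f p (z - p)) ?_ ?_
    (by positivity) fun k hk => ?_
  · rwa [eval_restrictLine, one_smul, add_sub_cancel]
  · rwa [coeff_zero_restrictLine]
  · rw [coeff_zero_restrictLine]
    exact norm_coeff_restrictLine_le hbound (z - p) hk

/-- The set whose supremum is `γ_f(p)`. -/
def gammaSet (f : MvPolynomial (Fin 2) 𝕜) (p : Fin 2 → 𝕜) (D : ℕ) : Set ℝ :=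
  {r | ∃ k, 1 ≤ k ∧ k ≤ D ∧ ∃ i ≤ k,
    r = ‖eval p ((pderiv 0)^[i] ((pderiv 1)^[k - i] f)) / eval p f‖ ^ ((1 : ℝ) / k)}

theorem bddAbove_gammaSet (f : MvPolynomial (Fin 2) 𝕜) (p : Fin 2 → 𝕜) (D : ℕ) :
    BddAbove (gammaSet f p D) := by
  refine (((Set.finite_Iic D).prod (Set.finite_Iic D)).image fun q : ℕ × ℕ =>
    ‖eval p ((pderiv 0)^[q.2] ((pderiv 1)^[q.1 - q.2] f)) / eval p f‖ ^ ((1 : ℝ) / q.1)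
    ).bddAbove.mono ?_
  rintro r ⟨k, -, hkD, i, hik, rfl⟩
  exact ⟨(k, i), ⟨hkD, hik.trans hkD⟩, rfl⟩

theorem norm_eval_pderiv_iterate_le_of_eq_sSup {f : MvPolynomial (Fin 2) 𝕜} {p : Fin 2 → 𝕜}
    {D : ℕ} (hD : f.totalDegree = D) (hp : eval p f ≠ 0) {γ : ℝ}
    (hγ : γ = sSup (gammaSet f p D)) (hγ0 : 0 ≤ γ) (k i : ℕ) (hk : 1 ≤ k) (hik : i ≤ k) :
    ‖eval p ((pderiv 0)^[i] ((pderiv 1)^[k - i] f))‖ ≤ ‖eval p f‖ * γ ^ k := by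
  rcases le_or_gt k D with hkD | hDk
  · have hmem : ‖eval p ((pderiv 0)^[i] ((pderiv 1)^[k - i] f)) / eval p f‖ ^ (k : ℝ)⁻¹ ≤ γ :=
      hγ ▸ le_csSup (bddAbove_gammaSet f p D) ⟨k, hk, hkD, i, hik, by rw [one_div]⟩
    rw [Real.rpow_inv_le_iff_of_pos (norm_nonneg _) hγ0 (by positivity), Real.rpow_natCast,
      norm_div, div_le_iff₀ (norm_pos_iff.2 hp)] at hmem
    linarith
  · rw [pderiv_iterate_pderiv_iterate_eq_zero (by omega), map_zero, norm_zero]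
    positivity

end RCLike

end MvPolynomial

theorem stmt14 (f : MvPolynomial (Fin 2) ℂ)
    (D : ℕ) (hD : f.totalDegree = D) (hD1 : 1 ≤ D)
    (p : EuclideanSpace ℂ (Fin 2)) (hp : MvPolynomial.eval p f ≠ 0)
    (γ : ℝ)
    (hγ : γ = sSup {r : ℝ | ∃ k, 1 ≤ k ∧ k ≤ D ∧ ∃ i ≤ k,
      r = ‖(MvPolynomial.eval p
            ((MvPolynomial.pderiv (0 : Fin 2))^[i]
              ((MvPolynomial.pderiv (1 : Fin 2))^[k - i] f)) / MvPolynomial.eval p f)‖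
          ^ ((1 : ℝ) / k)})
    (hγpos : 0 < γ) :
    Real.log 2 / (Real.sqrt 2 * γ)
        ≤ infDist p {x : EuclideanSpace ℂ (Fin 2) | MvPolynomial.eval x f = 0} ∧
    1 / (3 * γ) ≤ Real.log 2 / (Real.sqrt 2 * γ) := by
  have hbound := norm_eval_pderiv_iterate_le_of_eq_sSup hD hp hγ hγpos.le
  obtain ⟨x, hx⟩ := exists_eval_eq_zero_of_totalDegree_ne_zero (by omega : f.totalDegree ≠ 0)
  constructor
  · refine (le_infDist ⟨WithLp.toLp 2 x, hx⟩).2 fun z hz => ?_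
    rw [div_le_iff₀ (by positivity)]
    calc Real.log 2 ≤ γ * (‖z 0 - p 0‖ + ‖z 1 - p 1‖) :=
          log_two_le_mul_norm_sub_add_norm_sub hp hz hγpos.le hbound
      _ ≤ γ * (√2 * dist p z) := by gcongr; exact EuclideanSpace.norm_sub_add_norm_sub_le p z
      _ = dist p z * (√2 * γ) := by ring
  · have hsqrt2_le : √2 ≤ 3 * Real.log 2 := by
      rw [Real.sqrt_le_iff]
      constructor <;> nlinarith [Real.log_two_gt_d9]
    rw [div_le_div_iff₀ (by positivity) (by positivity)]
    nlinarith
end
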